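/- arXiv:1806.09661 — 2 statements merged into one kernel-verified Lean document; each statement's English description precedes it below -/
import Mathlib

section
/- For each i with 1 ≤ i ≤ n, the element ℛ_i = ϖ(ψ(H_i)) ∈ U(𝔮) commutes with 𝔤, i.e. [ℛ_i, x] = 0 in U(𝔮) for every x in the non-Abelian copy 𝔤 ⊂ 𝔮; equivalently, ℛ_i is invariant under the adjoint action of 𝔤 on U(𝔮). -/
open scoped BigOperators

set_option synthInstance.maxHeartbeats 1000000
set_option maxHeartbeats 1600000

noncomputable section

def jacobian {n : ℕ} (Q : Fin n → MvPolynomial (Fin n) ℂ) : MvPolynomial (Fin n) ℂ :=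
  (Matrix.of fun i j => MvPolynomial.pderiv j (Q i)).det

def tEqOne {n : ℕ} : MvPolynomial (Fin n × ℕ) ℂ →ₐ[ℂ] MvPolynomial (Fin n) ℂ :=
  MvPolynomial.aeval fun p => MvPolynomial.X p.1

def dpartial {n : ℕ} (j : Fin n) (P : MvPolynomial (Fin n × ℕ) ℂ) : MvPolynomial (Fin n) ℂ :=
  ∑ᶠ k : ℕ, (k : ℂ) • tEqOne (MvPolynomial.pderiv (j, k) P)

def jacobianT {n : ℕ} (P : Fin n → MvPolynomial (Fin n × ℕ) ℂ) : MvPolynomial (Fin n) ℂ :=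
  (Matrix.of fun i j => dpartial j (P i)).det

def IsSymmetricAlgebraUP {g S : Type} [AddCommGroup g] [Module ℂ g] [CommRing S] [Algebra ℂ S]
    (ι : g →ₗ[ℂ] S) : Prop :=
  ∀ (A : Type) [CommRing A] [Algebra ℂ A], ∀ φ : g →ₗ[ℂ] A,
    ∃! Φ : S →ₐ[ℂ] A, ∀ x, Φ (ι x) = φ x

def saLift {g S A : Type} [AddCommGroup g] [Module ℂ g] [CommRing S] [Algebra ℂ S]
    [CommRing A] [Algebra ℂ A] {ι : g →ₗ[ℂ] S} (hS : IsSymmetricAlgebraUP ι)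
    (φ : g →ₗ[ℂ] A) : S →ₐ[ℂ] A :=
  (hS A φ).choose

def IsHomogOfDeg {g S : Type} [AddCommGroup g] [Module ℂ g] [CommRing S] [Algebra ℂ S]
    (ι : g →ₗ[ℂ] S) (hS : IsSymmetricAlgebraUP ι) (d : ℕ) (H : S) : Prop :=
  ∀ c : ℂ, saLift hS (c • ι) H = c ^ d • H

def IsSymmetrisation {L : Type} [LieRing L] [LieAlgebra ℂ L] {S : Type} [CommRing S]
    [Algebra ℂ S] (ι : L →ₗ[ℂ] S)
    (ϖ : S →ₗ[ℂ] UniversalEnvelopingAlgebra ℂ L) : Prop :=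
  ∀ (d : ℕ) (x : Fin d → L),
    ϖ (∏ i, ι (x i)) = (d.factorial : ℂ)⁻¹ •
      ∑ σ : Equiv.Perm (Fin d),
        (List.ofFn fun i => UniversalEnvelopingAlgebra.ι ℂ (x (σ i))).prod

def rootSpaceOf {g : Type} [LieRing g] [LieAlgebra ℂ g] (hsub : LieSubalgebra ℂ g)
    (α : Module.Dual ℂ ↥hsub) : Submodule ℂ g where
  carrier := {x | ∀ t : hsub, ⁅(t : g), x⁆ = α t • x}
  add_mem' := by intro a b ha hb t; rw [lie_add, ha t, hb t, smul_add]
  zero_mem' := by intro t; rw [lie_zero, smul_zero]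
  smul_mem' := by intro c a ha t; rw [lie_smul, ha t, smul_comm]


section AuxSymAlg

variable {g S : Type} [AddCommGroup g] [Module ℂ g] [CommRing S] [Algebra ℂ S]
  {ι : g →ₗ[ℂ] S}

def monSet (ι : g →ₗ[ℂ] S) : Set S := {a : S | ∃ (d : ℕ) (x : Fin d → g), a = ∏ l, ι (x l)}

lemma sa_unique (hS : IsSymmetricAlgebraUP ι) {A : Type} [CommRing A] [Algebra ℂ A] {φ : g →ₗ[ℂ] A}
    {Φ₁ Φ₂ : S →ₐ[ℂ] A} (h1 : ∀ x, Φ₁ (ι x) = φ x) (h2 : ∀ x, Φ₂ (ι x) = φ x) : Φ₁ = Φ₂ := by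
  obtain ⟨Φ, _, hu⟩ := hS A φ
  rw [hu Φ₁ h1, hu Φ₂ h2]

lemma sa_adjoin (hS : IsSymmetricAlgebraUP ι) : Algebra.adjoin ℂ (Set.range ι) = ⊤ := by
  set A := Algebra.adjoin ℂ (Set.range ι) with hA
  have hmem : ∀ x, ι x ∈ A.toSubmodule := fun x => Algebra.subset_adjoin ⟨x, rfl⟩
  obtain ⟨Φ, hΦ, _⟩ := hS ↥A (LinearMap.codRestrict A.toSubmodule ι hmem)
  have key : A.val.comp Φ = AlgHom.id ℂ S :=
    sa_unique hS (φ := ι) (fun x => by simp [hΦ x]; rfl) (fun x => rfl)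
  rw [eq_top_iff]
  intro a _
  have : A.val (Φ a) = a := congrArg (fun F => F a) key
  rw [← this]; exact (Φ a).2

lemma sa_span (hS : IsSymmetricAlgebraUP ι) : Submodule.span ℂ (monSet ι) = ⊤ := by
  have hadj := sa_adjoin hS
  have h1 : (1 : S) ∈ monSet ι := ⟨0, Fin.elim0, by simp⟩
  have hmul : ∀ a ∈ monSet ι, ∀ b ∈ monSet ι, a * b ∈ monSet ι := by
    rintro _ ⟨d, x, rfl⟩ _ ⟨e, y, rfl⟩
    refine ⟨d + e, Fin.append x y, ?_⟩
    rw [Fin.prod_univ_add]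
    simp
  set M := Submodule.span ℂ (monSet ι) with hM
  have hmulM : ∀ a ∈ M, ∀ b ∈ M, a * b ∈ M := by
    have step : ∀ a ∈ monSet ι, ∀ b ∈ M, a * b ∈ M := by
      intro a ha b hb
      induction hb using Submodule.span_induction with
      | mem b hb => exact Submodule.subset_span (hmul _ ha _ hb)
      | zero => simp
      | add b c _ _ h h' => rw [mul_add]; exact M.add_mem h h'
      | smul c b _ h => rw [mul_smul_comm]; exact M.smul_mem c h
    intro a ha b hb
    induction ha using Submodule.span_induction with
    | mem a ha => exact step _ ha _ hb
    | zero => simp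
    | add a c _ _ h h' => rw [add_mul]; exact M.add_mem h h'
    | smul c a _ h => rw [smul_mul_assoc]; exact M.smul_mem c h
  set T : Subalgebra ℂ S :=
    { carrier := M
      mul_mem' := fun ha hb => hmulM _ ha _ hb
      one_mem' := Submodule.subset_span h1
      add_mem' := fun ha hb => M.add_mem ha hb
      zero_mem' := M.zero_mem
      algebraMap_mem' := fun c => by
        rw [Algebra.algebraMap_eq_smul_one]
        exact M.smul_mem c (Submodule.subset_span h1) } with hT
  have : Algebra.adjoin ℂ (Set.range ι) ≤ T := by
    rw [Algebra.adjoin_le_iff]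
    rintro _ ⟨x, rfl⟩
    exact Submodule.subset_span ⟨1, fun _ => x, by simp⟩
  rw [hadj] at this
  rw [eq_top_iff]
  exact fun a _ => this trivial

lemma sa_derivation (hS : IsSymmetricAlgebraUP ι) (B : g →ₗ[ℂ] g) :
    ∃ D : S →ₗ[ℂ] S, (∀ a b, D (a * b) = a * D b + D a * b) ∧ ∀ v, D (ι v) = ι (B v) := by
  set φ : g →ₗ[ℂ] TrivSqZeroExt S S :=
    { toFun := fun v => TrivSqZeroExt.inl (ι v) + TrivSqZeroExt.inr (ι (B v))
      map_add' := fun a b => by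
        simp [TrivSqZeroExt.inl_add, TrivSqZeroExt.inr_add, add_smul]; abel
      map_smul' := fun c a => by
        simp [TrivSqZeroExt.inl_smul, TrivSqZeroExt.inr_smul, smul_add] } with hφ
  obtain ⟨Φ, hΦ, _⟩ := hS (TrivSqZeroExt S S) φ
  have hfst : ((TrivSqZeroExt.fstHom ℂ S S).comp Φ) = AlgHom.id ℂ S := by
    refine sa_unique hS (φ := ι) (fun x => ?_) (fun x => rfl)
    simp [hΦ x, hφ]
  have hfst' : ∀ a, (Φ a).fst = a := fun a => congrArg (fun F => F a) hfst
  refine ⟨{ toFun := fun a => (Φ a).snd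
            map_add' := fun a b => by simp
            map_smul' := fun c a => by simp }, fun a b => ?_, fun v => ?_⟩
  · simp only [LinearMap.coe_mk, AddHom.coe_mk, map_mul, TrivSqZeroExt.snd_mul, hfst']
    simp [smul_eq_mul, mul_comm]
  · simp [hΦ v, hφ]

end AuxSymAlg

section AuxLeibniz

lemma deriv_prod {S : Type} [CommRing S] [Algebra ℂ S] (D : S →ₗ[ℂ] S)
    (hD : ∀ a b, D (a * b) = a * D b + D a * b)
    {m : Type} [DecidableEq m] (s : Finset m) (a : m → S) :
    D (∏ l ∈ s, a l) = ∑ j ∈ s, (∏ l ∈ s.erase j, a l) * D (a j) := by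
  induction s using Finset.induction with
  | empty => simp [show D 1 = 0 by have := hD 1 1; simpa using this]
  | insert i s hi ih =>
    have hsum : ∀ j ∈ s, a i * ((∏ l ∈ s.erase j, a l) * D (a j))
        = (∏ l ∈ (insert i s).erase j, a l) * D (a j) := by
      intro j hj
      rw [Finset.erase_insert_of_ne (by rintro rfl; exact hi hj),
        Finset.prod_insert (fun h => hi (Finset.erase_subset _ _ h))]
      ring
    rw [Finset.prod_insert hi, hD, ih, Finset.sum_insert hi, Finset.erase_insert hi,
      Finset.mul_sum, Finset.sum_congr rfl hsum]
    ring

end AuxLeibniz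

section AuxWord

variable {L : Type} [LieRing L] [LieAlgebra ℂ L]

local notation "ιU" => UniversalEnvelopingAlgebra.ι ℂ

attribute [local instance 100] LieRing.ofAssociativeRing
attribute [local instance 100] LieAlgebra.ofAssociativeAlgebra

lemma iota_comm (z v : L) : ιU z * ιU v - ιU v * ιU z = ιU ⁅z, v⁆ := by
  rw [LieHom.map_lie, Ring.lie_def]

lemma word_comm (z : L) : ∀ (d : ℕ) (w : Fin d → L),
    ιU z * (List.ofFn fun i => ιU (w i)).prod
      - (List.ofFn fun i => ιU (w i)).prod * ιU z
    = ∑ k : Fin d, (List.ofFn fun i => ιU (if i = k then ⁅z, w i⁆ else w i)).prod := by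
  intro d
  induction d with
  | zero => intro w; simp
  | succ d ih =>
    intro w
    have hz : ∀ v : Fin (d+1) → L, (List.ofFn fun i => ιU (v i)).prod
        = ιU (v 0) * (List.ofFn fun i : Fin d => ιU (v i.succ)).prod := by
      intro v; rw [List.ofFn_succ, List.prod_cons]
    rw [hz w]
    set R := (List.ofFn fun i : Fin d => ιU (w i.succ)).prod with hR
    have key : ιU z * (ιU (w 0) * R) - (ιU (w 0) * R) * ιU z
        = (ιU z * ιU (w 0) - ιU (w 0) * ιU z) * R + ιU (w 0) * (ιU z * R - R * ιU z) := by
      noncomm_ring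
    rw [key, iota_comm, ih (fun i => w i.succ), Fin.sum_univ_succ]
    congr 1
    · rw [hz]
      have h0 : (if (0 : Fin (d+1)) = 0 then ⁅z, w 0⁆ else w 0) = ⁅z, w 0⁆ := if_pos rfl
      have hfun : (fun i : Fin d => ιU (if i.succ = (0 : Fin (d+1)) then ⁅z, w i.succ⁆ else w i.succ))
          = fun i : Fin d => ιU (w i.succ) := by
        funext i; rw [if_neg (Fin.succ_ne_zero i)]
      rw [h0, hfun]
    · rw [Finset.mul_sum]
      refine Finset.sum_congr rfl fun k _ => ?_
      rw [hz]
      have h0 : (if (0 : Fin (d+1)) = k.succ then ⁅z, w 0⁆ else w 0) = w 0 :=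
        if_neg (Fin.succ_ne_zero k).symm
      have hfun : (fun i : Fin d => ιU (if i.succ = k.succ then ⁅z, w i.succ⁆ else w i.succ))
          = fun i : Fin d => ιU (if i = k then ⁅z, w i.succ⁆ else w i.succ) := by
        funext i
        simp [Fin.succ_inj]
      rw [h0, hfun]

lemma symm_equiv {S : Type} [CommRing S] [Algebra ℂ S]
    (ι : L →ₗ[ℂ] S) (hspan : Submodule.span ℂ (monSet ι) = ⊤)
    (ϖ : S →ₗ[ℂ] UniversalEnvelopingAlgebra ℂ L) (hϖ : IsSymmetrisation ι ϖ)
    (D : S →ₗ[ℂ] S) (hD : ∀ a b, D (a * b) = a * D b + D a * b)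
    (z : L) (hDι : ∀ v, D (ι v) = ι ⁅z, v⁆) (a : S) :
    ιU z * ϖ a - ϖ a * ιU z = ϖ (D a) := by
  have ha : a ∈ Submodule.span ℂ (monSet ι) := hspan ▸ Submodule.mem_top
  induction ha using Submodule.span_induction with
  | zero => simp
  | add a b _ _ h h' =>
    have e : ιU z * (ϖ a + ϖ b) - (ϖ a + ϖ b) * ιU z
        = (ιU z * ϖ a - ϖ a * ιU z) + (ιU z * ϖ b - ϖ b * ιU z) := by noncomm_ring
    rw [map_add, e, h, h', map_add, map_add]
  | smul c a _ h =>
    have e : ιU z * (c • ϖ a) - (c • ϖ a) * ιU z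
        = c • (ιU z * ϖ a - ϖ a * ιU z) := by
      rw [mul_smul_comm, smul_mul_assoc, smul_sub]
    rw [map_smul, e, h, map_smul, map_smul]
  | mem a hmem =>
    obtain ⟨d, x, rfl⟩ := hmem
    have hfac : ((d.factorial : ℂ)) ≠ 0 := by
      exact_mod_cast Nat.factorial_ne_zero d
    set y : Fin d → Fin d → L := fun j l => if l = j then ⁅z, x l⁆ else x l with hy
    have hprod : ∀ j : Fin d,
        (∏ l, ι (y j l)) = (∏ l ∈ Finset.univ.erase j, ι (x l)) * ι ⁅z, x j⁆ := by
      intro j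
      rw [← Finset.mul_prod_erase Finset.univ (fun l => ι (y j l)) (Finset.mem_univ j)]
      have h2 : ∀ l ∈ Finset.univ.erase j, ι (y j l) = ι (x l) := by
        intro l hl
        have : y j l = x l := if_neg (Finset.ne_of_mem_erase hl)
        rw [this]
      have h1 : y j j = ⁅z, x j⁆ := if_pos rfl
      rw [h1, Finset.prod_congr rfl h2, mul_comm]
    have hder : D (∏ l, ι (x l)) = ∑ j, ∏ l, ι (y j l) := by
      rw [deriv_prod D hD]
      refine Finset.sum_congr rfl fun j _ => ?_
      rw [hDι, ← hprod j]
    rw [hder, map_sum, hϖ d x, mul_smul_comm, smul_mul_assoc, ← smul_sub,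
      Finset.mul_sum, Finset.sum_mul, ← Finset.sum_sub_distrib]
    have hinner : ∀ σ : Equiv.Perm (Fin d),
        ιU z * (List.ofFn fun i => ιU (x (σ i))).prod
          - (List.ofFn fun i => ιU (x (σ i))).prod * ιU z
        = ∑ j, (List.ofFn fun i => ιU (y j (σ i))).prod := by
      intro σ
      rw [word_comm z d (fun i => x (σ i))]
      rw [← Equiv.sum_comp σ (fun j => (List.ofFn fun i => ιU (y j (σ i))).prod)]
      refine Finset.sum_congr rfl fun k _ => ?_
      have hf : (fun i => ιU (y (σ k) (σ i)))
          = fun i => ιU (if i = k then ⁅z, x (σ i)⁆ else x (σ i)) := by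
        funext i
        have : y (σ k) (σ i) = if i = k then ⁅z, x (σ i)⁆ else x (σ i) := by
          rw [hy]
          simp only [EmbeddingLike.apply_eq_iff_eq]
        rw [this]
      rw [hf]
    rw [Finset.sum_congr rfl (fun σ _ => hinner σ), Finset.sum_comm]
    have houter : ∀ j : Fin d,
        (∑ σ : Equiv.Perm (Fin d), (List.ofFn fun i => ιU (y j (σ i))).prod)
        = (d.factorial : ℂ) • ϖ (∏ l, ι (y j l)) := by
      intro j
      rw [hϖ d (y j), smul_smul, mul_inv_cancel₀ hfac, one_smul]
    rw [Finset.sum_congr rfl (fun j _ => houter j), ← Finset.smul_sum, smul_smul,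
      inv_mul_cancel₀ hfac, one_smul]

end AuxWord

lemma psi_equiv {g Sg q Sq : Type} [LieRing g] [LieAlgebra ℂ g] [CommRing Sg] [Algebra ℂ Sg]
    [LieRing q] [LieAlgebra ℂ q] [CommRing Sq] [Algebra ℂ Sq]
    (ιg : g →ₗ[ℂ] Sg) (hspan : Submodule.span ℂ (monSet ιg) = ⊤)
    (i0 i1 : g →ₗ[ℂ] q)
    (hq00 : ∀ x y : g, ⁅i0 x, i0 y⁆ = i0 ⁅x, y⁆)
    (hq01 : ∀ x y : g, ⁅i0 x, i1 y⁆ = i1 ⁅x, y⁆)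
    (ιq : q →ₗ[ℂ] Sq)
    (x : g)
    (E : Sg →ₗ[ℂ] Sg) (hE : ∀ a b, E (a * b) = a * E b + E a * b)
    (hEι : ∀ v, E (ιg v) = ιg ⁅x, v⁆)
    (Dq : Sq →ₗ[ℂ] Sq) (hDq : ∀ a b, Dq (a * b) = a * Dq b + Dq a * b)
    (hDqι : ∀ v, Dq (ιq v) = ιq ⁅i0 x, v⁆)
    (ψ : Sg →ₗ[ℂ] Sq)
    (hψ : ∀ (dd : ℕ) (t : Fin dd → g),
      ψ (∏ l, ιg (t l))
        = ∑ j : Fin dd, (∏ l ∈ Finset.univ.erase j, ιq (i0 (t l))) * ιq (i1 (t j)))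
    (a : Sg) : Dq (ψ a) = ψ (E a) := by
  have ha : a ∈ Submodule.span ℂ (monSet ιg) := hspan ▸ Submodule.mem_top
  induction ha using Submodule.span_induction with
  | zero => simp
  | add a b _ _ h h' => rw [map_add, map_add, h, h', map_add, map_add]
  | smul c a _ h => rw [map_smul, map_smul, h, map_smul, map_smul]
  | mem a hmem =>
    obtain ⟨dd, t, rfl⟩ := hmem
    set y : Fin dd → Fin dd → g := fun m l => if l = m then ⁅x, t l⁆ else t l with hy
    have hL : Dq (ψ (∏ l, ιg (t l)))
        = ∑ j, ((∏ l ∈ Finset.univ.erase j, ιq (i0 (t l))) * ιq (i1 ⁅x, t j⁆)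
            + ∑ m ∈ Finset.univ.erase j,
                ((∏ l ∈ (Finset.univ.erase j).erase m, ιq (i0 (t l)))
                  * ιq (i0 ⁅x, t m⁆)) * ιq (i1 (t j))) := by
      rw [hψ dd t, map_sum]
      refine Finset.sum_congr rfl fun j _ => ?_
      rw [hDq, hDqι, hq01]
      congr 1
      rw [deriv_prod Dq hDq, Finset.sum_mul]
      refine Finset.sum_congr rfl fun m _ => ?_
      rw [hDqι, hq00]
    have hprod : ∀ m : Fin dd,
        (∏ l, ιg (y m l)) = (∏ l ∈ Finset.univ.erase m, ιg (t l)) * ιg ⁅x, t m⁆ := by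
      intro m
      rw [← Finset.mul_prod_erase Finset.univ (fun l => ιg (y m l)) (Finset.mem_univ m)]
      have h2 : ∀ l ∈ Finset.univ.erase m, ιg (y m l) = ιg (t l) := fun l hl => by
        have : y m l = t l := if_neg (Finset.ne_of_mem_erase hl)
        rw [this]
      have h1 : y m m = ⁅x, t m⁆ := if_pos rfl
      rw [h1, Finset.prod_congr rfl h2, mul_comm]
    have hR : ψ (E (∏ l, ιg (t l)))
        = ∑ m, ((∏ l ∈ Finset.univ.erase m, ιq (i0 (t l))) * ιq (i1 ⁅x, t m⁆)
            + ∑ j ∈ Finset.univ.erase m,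
                ((∏ l ∈ (Finset.univ.erase j).erase m, ιq (i0 (t l)))
                  * ιq (i0 ⁅x, t m⁆)) * ιq (i1 (t j))) := by
      have hEprod : E (∏ l, ιg (t l)) = ∑ m, ∏ l, ιg (y m l) := by
        rw [deriv_prod E hE]
        refine Finset.sum_congr rfl fun m _ => ?_
        rw [hEι, ← hprod m]
      rw [hEprod, map_sum]
      refine Finset.sum_congr rfl fun m _ => ?_
      rw [hψ dd (y m)]
      rw [← Finset.add_sum_erase _ _ (Finset.mem_univ m)]
      congr 1
      · have h1 : y m m = ⁅x, t m⁆ := if_pos rfl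
        have h2 : ∀ l ∈ Finset.univ.erase m, ιq (i0 (y m l)) = ιq (i0 (t l)) := fun l hl => by
          have : y m l = t l := if_neg (Finset.ne_of_mem_erase hl)
          rw [this]
        rw [h1, Finset.prod_congr rfl h2]
      · refine Finset.sum_congr rfl fun j hj => ?_
        have hmj : m ∈ Finset.univ.erase j :=
          Finset.mem_erase.mpr ⟨(Finset.ne_of_mem_erase hj).symm, Finset.mem_univ m⟩
        rw [← Finset.mul_prod_erase _ (fun l => ιq (i0 (y m l))) hmj]
        have h1 : y m m = ⁅x, t m⁆ := if_pos rfl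
        have h2 : ∀ l ∈ (Finset.univ.erase j).erase m, ιq (i0 (y m l)) = ιq (i0 (t l)) :=
          fun l hl => by
            have : y m l = t l := if_neg (Finset.ne_of_mem_erase hl)
            rw [this]
        have h3 : y m j = t j := if_neg (Finset.ne_of_mem_erase hj)
        rw [h1, h3, Finset.prod_congr rfl h2, mul_comm (ιq (i0 ⁅x, t m⁆))]
    rw [hL, hR]
    rw [Finset.sum_add_distrib, Finset.sum_add_distrib]
    congr 1
    refine Finset.sum_comm' ?_
    intro a b
    simp only [Finset.mem_erase, Finset.mem_univ, and_true, true_and]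
    exact ne_comm

/-- each `ℛ_i = ϖ(ψ(H_i)) ∈ U(𝔮)` commutes with the non-Abelian copy of `𝔤`
inside `𝔮`, i.e. is a `𝔤`-invariant of `U(𝔮)`. -/
theorem R_i_commutes_with_g
    -- 𝔤: a simple complex Lie algebra of rank n
    {g : Type} [LieRing g] [LieAlgebra ℂ g] [LieAlgebra.IsSimple ℂ g] [Module.Finite ℂ g]
    {n : ℕ}
    -- the symmetric algebra S(𝔤)
    {Sg : Type} [CommRing Sg] [Algebra ℂ Sg] (ιg : g →ₗ[ℂ] Sg)
    (hSg : IsSymmetricAlgebraUP ιg)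
    -- the action of 𝔤 on S(𝔤) by derivations extending the adjoint action
    (Dg : g → Sg →ₗ[ℂ] Sg)
    (hDgmul : ∀ x a b, Dg x (a * b) = a * Dg x b + Dg x a * b)
    (hDgι : ∀ x y, Dg x (ιg y) = ιg ⁅x, y⁆)
    -- generators H₁,…,Hₙ of S(𝔤)^𝔤, homogeneous of degrees d₁,…,dₙ, alg. independent
    (d : Fin n → ℕ) (H : Fin n → Sg)
    (hHhom : ∀ i, IsHomogOfDeg ιg hSg (d i) (H i))
    (hHinv : ∀ i x, Dg x (H i) = 0)
    (hHgen : (Algebra.adjoin ℂ (Set.range H) : Set Sg) = {a | ∀ x, Dg x a = 0})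
    (hHindep : AlgebraicIndependent ℂ H)
    -- the Takiff Lie algebra 𝔮 = 𝔤 ⋉ 𝔤u, with x = i0 x and xu = i1 x
    {q : Type} [LieRing q] [LieAlgebra ℂ q]
    (i0 i1 : g →ₗ[ℂ] q)
    (hq00 : ∀ x y : g, ⁅i0 x, i0 y⁆ = i0 ⁅x, y⁆)
    (hq01 : ∀ x y : g, ⁅i0 x, i1 y⁆ = i1 ⁅x, y⁆)
    (hq11 : ∀ x y : g, ⁅i1 x, i1 y⁆ = 0)
    (hqCompl : IsCompl (LinearMap.range i0) (LinearMap.range i1))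
    (hi0inj : Function.Injective i0) (hi1inj : Function.Injective i1)
    -- the symmetric algebra S(𝔮) and the symmetrisation map ϖ : S(𝔮) → U(𝔮)
    {Sq : Type} [CommRing Sq] [Algebra ℂ Sq] (ιq : q →ₗ[ℂ] Sq)
    (hSq : IsSymmetricAlgebraUP ιq)
    (ϖq : Sq →ₗ[ℂ] UniversalEnvelopingAlgebra ℂ q)
    (hϖq : IsSymmetrisation ιq ϖq)
    -- the map ψ : S(𝔤) → S(𝔮), ξ₁⋯ξ_d ↦ Σ_j ξ₁⋯ξ_{j−1}(ξ_j u)ξ_{j+1}⋯ξ_d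
    (ψ : Sg →ₗ[ℂ] Sq)
    (hψ : ∀ (dd : ℕ) (x : Fin dd → g),
      ψ (∏ l, ιg (x l))
        = ∑ j : Fin dd, (∏ l ∈ Finset.univ.erase j, ιq (i0 (x l))) * ιq (i1 (x j)))
    :
    ∀ (i : Fin n) (x : g),
      UniversalEnvelopingAlgebra.ι ℂ (i0 x) * ϖq (ψ (H i))
        = ϖq (ψ (H i)) * UniversalEnvelopingAlgebra.ι ℂ (i0 x) := by
  intro i x
  have hspang : Submodule.span ℂ (monSet ιg) = ⊤ := sa_span hSg
  have hspanq : Submodule.span ℂ (monSet ιq) = ⊤ := sa_span hSq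
  set B : q →ₗ[ℂ] q :=
    { toFun := fun v => ⁅i0 x, v⁆
      map_add' := fun a b => lie_add _ a b
      map_smul' := fun c v => by simp [lie_smul] } with hB
  obtain ⟨Dq, hDq, hDqι⟩ := sa_derivation hSq B
  have hDqι' : ∀ v, Dq (ιq v) = ιq ⁅i0 x, v⁆ := fun v => hDqι v
  have hzero : Dq (ψ (H i)) = 0 := by
    rw [psi_equiv ιg hspang i0 i1 hq00 hq01 ιq x (Dg x) (hDgmul x) (hDgι x) Dq hDq hDqι' ψ hψ,
      hHinv i x, map_zero]
  have := symm_equiv ιq hspanq ϖq hϖq Dq hDq (i0 x) hDqι' (ψ (H i))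
  rw [hzero, map_zero] at this
  exact sub_eq_zero.mp this


end
end

section
/- Bigrade S(𝔤) by the vector space decomposition 𝔤 = 𝔫⁻ ⊕ 𝔟 and let H_i^• be the bihomogeneous component of H_i of highest degree with respect to 𝔫⁻; it is known that H_i^• ∈ 𝔟·S^{d_i−1}(𝔫⁻) and that H_1^•,…,H_n^• are algebraically independent. Write ψ(H_i^•) = H_{i,1} + X_i with H_{i,1} ∈ (𝔟u)·S^{d_i−1}(𝔫⁻) and X_i ∈ 𝔟·(𝔫⁻u)·S^{d_i−2}(𝔫⁻). Then the polynomials H_{1,1},…,H_{n,1} ∈ S(𝔮) are algebraically independent, and ψ(H_i) ∈ H_{i,1} + 𝔟·S(𝔮) for every i. -/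
open scoped BigOperators

set_option synthInstance.maxHeartbeats 1000000
set_option maxHeartbeats 1600000

noncomputable section

section myHelpers

variable {g S A : Type} [AddCommGroup g] [Module ℂ g] [CommRing S] [Algebra ℂ S]
  [CommRing A] [Algebra ℂ A] {ι : g →ₗ[ℂ] S} (hS : IsSymmetricAlgebraUP ι)

lemma saLift_ι (φ : g →ₗ[ℂ] A) (x : g) : saLift hS φ (ι x) = φ x :=
  (hS A φ).choose_spec.1 x

lemma saLift_unique (φ : g →ₗ[ℂ] A) (Φ : S →ₐ[ℂ] A) (h : ∀ x, Φ (ι x) = φ x) :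
    Φ = saLift hS φ :=
  (hS A φ).choose_spec.2 Φ h

include hS in
lemma adjoin_range_ι_eq_top : Algebra.adjoin ℂ (Set.range ι) = ⊤ := by
  set A' := Algebra.adjoin ℂ (Set.range ι)
  set φ : g →ₗ[ℂ] A' := LinearMap.codRestrict (Subalgebra.toSubmodule A') ι
    (fun x => Algebra.subset_adjoin ⟨x, rfl⟩)
  have h1 : ∀ x, (A'.val.comp (saLift hS φ)) (ι x) = ι x := by
    intro x
    simp only [AlgHom.comp_apply, saLift_ι hS φ x]
    rfl
  have h2 : ∀ x, (AlgHom.id ℂ S) (ι x) = ι x := fun x => rfl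
  have := (saLift_unique hS ι _ h1).trans (saLift_unique hS ι _ h2).symm
  rw [eq_top_iff]
  intro z _
  have : (A'.val.comp (saLift hS φ)) z = z := by rw [this]; rfl
  rw [← this]
  exact (saLift hS φ z).2

lemma my_prod_smul (p : ℕ) (c : ℂ) (f : Fin p → S) :
    (∏ l, c • f l) = c ^ p • ∏ l, f l := by
  simp only [Algebra.smul_def, Finset.prod_mul_distrib, Finset.prod_const, map_pow]
  congr 1
  rw [Finset.card_univ, Fintype.card_fin]

end myHelpers

lemma vandermonde_smul {M : Type} [AddCommGroup M] [Module ℂ M] {E : ℕ} (w : ℕ → M)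
    (h : ∀ c : ℂ, ∑ m ∈ Finset.range E, c ^ m • w m = 0) : ∀ m < E, w m = 0 := by
  classical
  set v : Fin E → ℂ := fun i => (i : ℕ)
  set A : Matrix (Fin E) (Fin E) ℂ := Matrix.vandermonde v
  have hinj : Function.Injective v := by
    intro a b hab
    have : ((a : ℕ) : ℂ) = ((b : ℕ) : ℂ) := hab
    exact Fin.ext (Nat.cast_injective this)
  have hdet : IsUnit A.det := by
    have := Matrix.det_vandermonde_ne_zero_iff.mpr hinj
    exact this.isUnit
  have hBA : A⁻¹ * A = 1 := Matrix.nonsing_inv_mul A hdet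
  intro m hm
  have key : ∀ k : Fin E, ∑ j : Fin E, A k j • w j = 0 := by
    intro k
    have := h (v k)
    rw [Finset.sum_range fun m => (v k) ^ m • w m] at this
    simpa [A, Matrix.vandermonde] using this
  have hw : w m = ∑ j : Fin E, (1 : Matrix (Fin E) (Fin E) ℂ) ⟨m, hm⟩ j • w (j : ℕ) := by
    rw [Finset.sum_eq_single (⟨m, hm⟩ : Fin E)]
    · simp
    · intro b _ hb; simp [Matrix.one_apply, (Ne.symm hb)]
    · intro hb; exact absurd (Finset.mem_univ _) hb
  rw [hw, ← hBA]
  calc ∑ j : Fin E, (A⁻¹ * A) ⟨m, hm⟩ j • w (j : ℕ)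
      = ∑ j : Fin E, ∑ k : Fin E, (A⁻¹ ⟨m, hm⟩ k * A k j) • w (j : ℕ) := by
        refine Finset.sum_congr rfl fun j _ => ?_
        rw [Matrix.mul_apply, Finset.sum_smul]
    _ = ∑ k : Fin E, A⁻¹ ⟨m, hm⟩ k • ∑ j : Fin E, A k j • w (j : ℕ) := by
        rw [Finset.sum_comm]
        refine Finset.sum_congr rfl fun k _ => ?_
        rw [Finset.smul_sum]
        refine Finset.sum_congr rfl fun j _ => ?_
        rw [mul_smul]
    _ = 0 := by
        refine Finset.sum_eq_zero fun k _ => ?_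
        rw [key k, smul_zero]

/-- with `H_i^•` the bihomogeneous component of `H_i` of highest `𝔫⁻`-degree
(of bidegree `(d_i − 1, 1)`, and algebraically independent, by `[PY, Sec. 3]`), writing
`ψ(H_i^•) = H_{i,1} + X_i` with `H_{i,1} ∈ (𝔟u)·S^{d_i−1}(𝔫⁻)` and
`X_i ∈ 𝔟·(𝔫⁻u)·S^{d_i−2}(𝔫⁻)`, the `H_{i,1}` are algebraically independent and
`ψ(H_i) ∈ H_{i,1} + 𝔟·S(𝔮)`. -/
theorem psi_H_modulo_ideal_generated_by_b
    -- 𝔤: a simple complex Lie algebra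
    {g : Type} [LieRing g] [LieAlgebra ℂ g] [LieAlgebra.IsSimple ℂ g] [Module.Finite ℂ g]
    {n : ℕ}
    -- triangular decomposition 𝔤 = 𝔫⁻ ⊕ 𝔥 ⊕ 𝔫⁺, 𝔟 = 𝔥 ⊕ 𝔫⁺
    (hsub nminus nplus : LieSubalgebra ℂ g)
    (hCartan : hsub.IsCartanSubalgebra)
    (hTriang : DirectSum.IsInternal fun i : Fin 3 =>
      (![LieSubalgebra.toSubmodule nminus, LieSubalgebra.toSubmodule hsub,
        LieSubalgebra.toSubmodule nplus]) i)
    -- the symmetric algebra S(𝔤)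
    {Sg : Type} [CommRing Sg] [Algebra ℂ Sg] (ιg : g →ₗ[ℂ] Sg)
    (hSg : IsSymmetricAlgebraUP ιg)
    -- the action of 𝔤 on S(𝔤) by derivations extending the adjoint action
    (Dg : g → Sg →ₗ[ℂ] Sg)
    (hDgmul : ∀ x a b, Dg x (a * b) = a * Dg x b + Dg x a * b)
    (hDgι : ∀ x y, Dg x (ιg y) = ιg ⁅x, y⁆)
    -- generators H₁,…,Hₙ of S(𝔤)^𝔤, homogeneous of degrees d₁,…,dₙ, alg. independent
    (d : Fin n → ℕ) (H : Fin n → Sg)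
    (hHhom : ∀ i, IsHomogOfDeg ιg hSg (d i) (H i))
    (hHinv : ∀ i x, Dg x (H i) = 0)
    (hHgen : (Algebra.adjoin ℂ (Set.range H) : Set Sg) = {a | ∀ x, Dg x a = 0})
    (hHindep : AlgebraicIndependent ℂ H)
    -- the projections of 𝔤 onto 𝔫⁻ and onto 𝔟 = 𝔥 ⊕ 𝔫⁺, giving the bigrading of S(𝔤)
    (πn πb : g →ₗ[ℂ] g)
    (hπsum : ∀ x, πn x + πb x = x)
    (hπn1 : ∀ x ∈ nminus, πn x = x)
    (hπn0 : ∀ x : g,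
      x ∈ LieSubalgebra.toSubmodule hsub ⊔ LieSubalgebra.toSubmodule nplus → πn x = 0)
    (hπb0 : ∀ x ∈ nminus, πb x = 0)
    (hπb1 : ∀ x : g,
      x ∈ LieSubalgebra.toSubmodule hsub ⊔ LieSubalgebra.toSubmodule nplus → πb x = x)
    -- H_i^•: the bihomogeneous component of H_i of highest 𝔫⁻-degree;
    -- by [PY, Sec. 3] it has 𝔫⁻-degree d_i − 1
    (Hbul : Fin n → Sg)
    (hHbulEigen : ∀ (i) (c : ℂ),
      saLift hSg (ιg ∘ₗ (c • πn + πb)) (Hbul i) = c ^ (d i - 1) • Hbul i)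
    (hHbulTop : ∀ i, ∃ rest : ℕ → Sg,
      (∀ (a : ℕ) (c : ℂ), saLift hSg (ιg ∘ₗ (c • πn + πb)) (rest a) = c ^ a • rest a) ∧
      (∀ a, d i - 1 ≤ a → rest a = 0) ∧
      H i = Hbul i + ∑ a ∈ Finset.range (d i), rest a)
    (hHbulNe : ∀ i, Hbul i ≠ 0)
    -- known: H_i^• ∈ 𝔟·S^{d_i−1}(𝔫⁻), and the H_i^• are algebraically independent
    (hHbulMem : ∀ i, Hbul i ∈ Submodule.span ℂ {z : Sg | ∃ b : g,
      b ∈ LieSubalgebra.toSubmodule hsub ⊔ LieSubalgebra.toSubmodule nplus ∧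
      ∃ x : Fin (d i - 1) → g, (∀ l, x l ∈ nminus) ∧ z = ιg b * ∏ l, ιg (x l)})
    (hHbulIndep : AlgebraicIndependent ℂ Hbul)
    -- the Takiff Lie algebra 𝔮 = 𝔤 ⋉ 𝔤u, with x = i0 x and xu = i1 x
    {q : Type} [LieRing q] [LieAlgebra ℂ q]
    (i0 i1 : g →ₗ[ℂ] q)
    (hq00 : ∀ x y : g, ⁅i0 x, i0 y⁆ = i0 ⁅x, y⁆)
    (hq01 : ∀ x y : g, ⁅i0 x, i1 y⁆ = i1 ⁅x, y⁆)
    (hq11 : ∀ x y : g, ⁅i1 x, i1 y⁆ = 0)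
    (hqCompl : IsCompl (LinearMap.range i0) (LinearMap.range i1))
    (hi0inj : Function.Injective i0) (hi1inj : Function.Injective i1)
    -- the symmetric algebra S(𝔮) and the symmetrisation map ϖ : S(𝔮) → U(𝔮)
    {Sq : Type} [CommRing Sq] [Algebra ℂ Sq] (ιq : q →ₗ[ℂ] Sq)
    (hSq : IsSymmetricAlgebraUP ιq)
    (ϖq : Sq →ₗ[ℂ] UniversalEnvelopingAlgebra ℂ q)
    (hϖq : IsSymmetrisation ιq ϖq)
    -- the map ψ : S(𝔤) → S(𝔮), ξ₁⋯ξ_d ↦ Σ_j ξ₁⋯ξ_{j−1}(ξ_j u)ξ_{j+1}⋯ξ_d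
    (ψ : Sg →ₗ[ℂ] Sq)
    (hψ : ∀ (dd : ℕ) (x : Fin dd → g),
      ψ (∏ l, ιg (x l))
        = ∑ j : Fin dd, (∏ l ∈ Finset.univ.erase j, ιq (i0 (x l))) * ιq (i1 (x j)))
    -- the decomposition ψ(H_i^•) = H_{i,1} + X_i
    (H1i Xi : Fin n → Sq)
    (hsplit : ∀ i, ψ (Hbul i) = H1i i + Xi i)
    (hH1mem : ∀ i, H1i i ∈ Submodule.span ℂ {z : Sq | ∃ b : g,
      b ∈ LieSubalgebra.toSubmodule hsub ⊔ LieSubalgebra.toSubmodule nplus ∧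
      ∃ x : Fin (d i - 1) → g, (∀ l, x l ∈ nminus) ∧
      z = ιq (i1 b) * ∏ l, ιq (i0 (x l))})
    (hXmem : ∀ i, Xi i ∈ Submodule.span ℂ {z : Sq | ∃ b : g,
      b ∈ LieSubalgebra.toSubmodule hsub ⊔ LieSubalgebra.toSubmodule nplus ∧
      ∃ y ∈ nminus, ∃ x : Fin (d i - 2) → g, (∀ l, x l ∈ nminus) ∧
      z = ιq (i0 b) * ιq (i1 y) * ∏ l, ιq (i0 (x l))}) :
    AlgebraicIndependent ℂ H1i
    ∧ ∀ i, ψ (H i) - H1i i ∈ Ideal.span {z : Sq | ∃ b : g,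
        b ∈ LieSubalgebra.toSubmodule hsub ⊔ LieSubalgebra.toSubmodule nplus ∧
        z = ιq (i0 b)} := by
  classical
  set Bm : Submodule ℂ g := LieSubalgebra.toSubmodule hsub ⊔ LieSubalgebra.toSubmodule nplus
    with hBmdef
  -- basic decomposition facts
  have hdecomp : ∀ x : g, ∃ a, a ∈ nminus ∧ ∃ b, b ∈ Bm ∧ x = a + b := by
    intro x
    have htop := hTriang.submodule_iSup_eq_top
    have hle : (⨆ i : Fin 3, (![LieSubalgebra.toSubmodule nminus, LieSubalgebra.toSubmodule hsub,
        LieSubalgebra.toSubmodule nplus]) i) ≤ LieSubalgebra.toSubmodule nminus ⊔ Bm := by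
      refine iSup_le fun i => ?_
      fin_cases i
      · exact le_sup_left
      · exact le_trans le_sup_left le_sup_right
      · exact le_trans le_sup_right le_sup_right
    have hx : x ∈ LieSubalgebra.toSubmodule nminus ⊔ Bm := hle (htop ▸ Submodule.mem_top)
    obtain ⟨a, ha, b, hb, hab⟩ := Submodule.mem_sup.mp hx
    exact ⟨a, (LieSubalgebra.mem_toSubmodule _).mp ha, b, hb, hab.symm⟩
  have hπn_mem : ∀ x : g, πn x ∈ nminus := by
    intro x
    obtain ⟨a, ha, b, hb, rfl⟩ := hdecomp x
    rw [map_add, hπn1 a ha, hπn0 b hb, add_zero]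
    exact ha
  have hπb_mem : ∀ x : g, πb x ∈ Bm := by
    intro x
    obtain ⟨a, ha, b, hb, rfl⟩ := hdecomp x
    rw [map_add, hπb0 a ha, hπb1 b hb, zero_add]
    exact hb
  -- Part 1 : algebraic independence of the H1i
  -- projections q → g
  set e0 : g ≃ₗ[ℂ] LinearMap.range i0 := LinearEquiv.ofInjective i0 hi0inj with he0
  set e1 : g ≃ₗ[ℂ] LinearMap.range i1 := LinearEquiv.ofInjective i1 hi1inj with he1
  set pr0 : q →ₗ[ℂ] LinearMap.range i0 :=
    (LinearMap.range i0).projectionOnto (LinearMap.range i1) hqCompl with hpr0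
  set pr1 : q →ₗ[ℂ] LinearMap.range i1 :=
    (LinearMap.range i1).projectionOnto (LinearMap.range i0) hqCompl.symm with hpr1
  set p0 : q →ₗ[ℂ] g := e0.symm.toLinearMap ∘ₗ pr0 with hp0def
  set p1 : q →ₗ[ℂ] g := e1.symm.toLinearMap ∘ₗ pr1 with hp1def
  have hp00 : ∀ x, p0 (i0 x) = x := by
    intro x
    have h1 : i0 x = ((e0 x : LinearMap.range i0) : q) := by
      rw [he0]; rfl
    rw [hp0def, LinearMap.comp_apply, hpr0, h1, Submodule.projectionOnto_apply_left]
    exact e0.symm_apply_apply x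
  have hp01 : ∀ x, p0 (i1 x) = 0 := by
    intro x
    have h1 : i1 x = ((⟨i1 x, ⟨x, rfl⟩⟩ : LinearMap.range i1) : q) := rfl
    rw [hp0def, LinearMap.comp_apply, hpr0, h1, Submodule.projectionOnto_apply_right,
      map_zero]
  have hp10 : ∀ x, p1 (i0 x) = 0 := by
    intro x
    have h1 : i0 x = ((⟨i0 x, ⟨x, rfl⟩⟩ : LinearMap.range i0) : q) := rfl
    rw [hp1def, LinearMap.comp_apply, hpr1, h1, Submodule.projectionOnto_apply_right,
      map_zero]
  have hp11 : ∀ x, p1 (i1 x) = x := by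
    intro x
    have h1 : i1 x = ((e1 x : LinearMap.range i1) : q) := by
      rw [he1]; rfl
    rw [hp1def, LinearMap.comp_apply, hpr1, h1, Submodule.projectionOnto_apply_left]
    exact e1.symm_apply_apply x
  set θ : Sq →ₐ[ℂ] Sg := saLift hSq (ιg ∘ₗ (πn ∘ₗ p0 + πb ∘ₗ p1)) with hθdef
  have hθι : ∀ w, θ (ιq w) = ιg (πn (p0 w) + πb (p1 w)) := by
    intro w
    rw [hθdef, saLift_ι hSq _ w]
    rfl
  have hθ0 : ∀ x, θ (ιq (i0 x)) = ιg (πn x) := by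
    intro x
    rw [hθι, hp00, hp10, map_zero, add_zero]
  have hθ1 : ∀ x, θ (ιq (i1 x)) = ιg (πb x) := by
    intro x
    rw [hθι, hp01, hp11, map_zero, zero_add]
  have hθXi : ∀ i, θ (Xi i) = 0 := by
    intro i
    have hle : Submodule.span ℂ {z : Sq | ∃ b : g, b ∈ Bm ∧
        ∃ y ∈ nminus, ∃ x : Fin (d i - 2) → g, (∀ l, x l ∈ nminus) ∧
        z = ιq (i0 b) * ιq (i1 y) * ∏ l, ιq (i0 (x l))} ≤ LinearMap.ker θ.toLinearMap := by
      rw [Submodule.span_le]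
      rintro z ⟨b, hb, y, hy, x, hx, rfl⟩
      simp only [SetLike.mem_coe, LinearMap.mem_ker, AlgHom.toLinearMap_apply]
      rw [map_mul, map_mul, hθ0, hπn0 b hb, map_zero, zero_mul, zero_mul]
    exact hle (hXmem i)
  have hθψ : ∀ i, ∀ z ∈ Submodule.span ℂ {z : Sg | ∃ b : g, b ∈ Bm ∧
      ∃ x : Fin (d i - 1) → g, (∀ l, x l ∈ nminus) ∧ z = ιg b * ∏ l, ιg (x l)},
      θ (ψ z) = z := by
    intro i z hz
    have heq : Set.EqOn (θ.toLinearMap ∘ₗ ψ) (LinearMap.id : Sg →ₗ[ℂ] Sg)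
        {z : Sg | ∃ b : g, b ∈ Bm ∧
          ∃ x : Fin (d i - 1) → g, (∀ l, x l ∈ nminus) ∧ z = ιg b * ∏ l, ιg (x l)} := by
      rintro z ⟨b, hb, x, hx, rfl⟩
      simp only [LinearMap.comp_apply, AlgHom.toLinearMap_apply, LinearMap.id_apply]
      set ξ : Fin (d i - 1 + 1) → g := Fin.cons b x with hξ
      have hz2 : ιg b * ∏ l, ιg (x l) = ∏ l, ιg (ξ l) := by
        rw [Fin.prod_univ_succ]
        simp [hξ]
      rw [hz2, hψ (d i - 1 + 1) ξ, map_sum, Fin.sum_univ_succ]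
      have hterm0 : θ ((∏ l ∈ Finset.univ.erase 0, ιq (i0 (ξ l))) * ιq (i1 (ξ 0)))
          = ∏ l, ιg (ξ l) := by
        rw [map_mul, map_prod]
        have herase : (Finset.univ.erase (0 : Fin (d i - 1 + 1)))
            = Finset.univ.image (Fin.succAbove 0) := by
          rw [Fin.image_succAbove_univ, Finset.compl_singleton]
        rw [herase, Finset.prod_image (fun a _ b _ h => Fin.succAbove_right_injective h)]
        have : ∀ l : Fin (d i - 1), θ (ιq (i0 (ξ (Fin.succAbove 0 l)))) = ιg (x l) := by
          intro l
          rw [Fin.succAbove_zero, hθ0]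
          have : ξ (Fin.succ l) = x l := by simp [hξ]
          rw [this, hπn1 (x l) (hx l)]
        rw [Finset.prod_congr rfl fun l _ => this l]
        have hξ0 : ξ 0 = b := by simp [hξ]
        rw [hξ0, hθ1, hπb1 b hb, Fin.prod_univ_succ, hξ0]
        rw [mul_comm]
        exact congrArg (ιg b * ·) (Finset.prod_congr rfl fun l _ => by simp [hξ])
      have htermS : ∀ j : Fin (d i - 1),
          θ ((∏ l ∈ Finset.univ.erase j.succ, ιq (i0 (ξ l))) * ιq (i1 (ξ j.succ))) = 0 := by
        intro j
        rw [map_mul, map_prod]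
        have h0mem : (0 : Fin (d i - 1 + 1)) ∈ Finset.univ.erase j.succ := by
          rw [Finset.mem_erase]
          exact ⟨(Fin.succ_ne_zero j).symm, Finset.mem_univ _⟩
        have hf0 : θ (ιq (i0 (ξ 0))) = 0 := by
          have hξ0 : ξ 0 = b := by simp [hξ]
          rw [hθ0, hξ0, hπn0 b hb, map_zero]
        rw [Finset.prod_eq_zero h0mem hf0, zero_mul]
      rw [hterm0, Finset.sum_eq_zero fun j _ => htermS j, add_zero]
    have := LinearMap.eqOn_span heq hz
    simpa using this
  have hθH1 : ∀ i, θ (H1i i) = Hbul i := by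
    intro i
    have h1 : θ (ψ (Hbul i)) = Hbul i := hθψ i (Hbul i) (hHbulMem i)
    have h2 := hsplit i
    have : θ (H1i i) + θ (Xi i) = Hbul i := by
      rw [← map_add, ← h2, h1]
    rwa [hθXi i, add_zero] at this
  have hpart1 : AlgebraicIndependent ℂ H1i := by
    have hcomp : ⇑θ ∘ H1i = Hbul := funext hθH1
    exact AlgebraicIndependent.of_comp θ (hcomp ▸ hHbulIndep)
  -- ===== Part 2 machinery =====
  set ISET : Set Sq := {z : Sq | ∃ b : g, b ∈ Bm ∧ z = ιq (i0 b)} with hISET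
  set msetp : ℕ × ℕ → Set Sg := fun r => {z | ∃ x : Fin r.1 → g, (∀ l, x l ∈ nminus) ∧
      ∃ bb : Fin r.2 → g, (∀ l, bb l ∈ Bm) ∧ z = (∏ l, ιg (x l)) * ∏ l, ιg (bb l)} with hmsetp
  have hone : (1 : Sg) ∈ msetp (0, 0) := by
    refine ⟨Fin.elim0, fun l => l.elim0, Fin.elim0, fun l => l.elim0, ?_⟩
    simp
  have hmul : ∀ r r' : ℕ × ℕ, ∀ z ∈ msetp r, ∀ z' ∈ msetp r',
      z * z' ∈ msetp (r.1 + r'.1, r.2 + r'.2) := by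
    rintro ⟨p, qd⟩ ⟨p', q'⟩ z ⟨x, hx, bb, hbb, rfl⟩ z' ⟨x', hx', bb', hbb', rfl⟩
    refine ⟨Fin.append x x', ?_, Fin.append bb bb', ?_, ?_⟩
    · intro l
      refine Fin.addCases (fun i => ?_) (fun i => ?_) l
      · rw [Fin.append_left]; exact hx i
      · rw [Fin.append_right]; exact hx' i
    · intro l
      refine Fin.addCases (fun i => ?_) (fun i => ?_) l
      · rw [Fin.append_left]; exact hbb i
      · rw [Fin.append_right]; exact hbb' i
    · rw [Fin.prod_univ_add, Fin.prod_univ_add]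
      simp only [Fin.append_left, Fin.append_right]
      ring
  have hspanU : ∀ z : Sg, z ∈ Submodule.span ℂ (⋃ r : ℕ × ℕ, msetp r) := by
    set U : Set Sg := ⋃ r : ℕ × ℕ, msetp r with hU
    set Usub : Submonoid Sg :=
      { carrier := U
        one_mem' := Set.mem_iUnion.mpr ⟨(0, 0), hone⟩
        mul_mem' := by
          intro a b ha hb
          obtain ⟨r, hr⟩ := Set.mem_iUnion.mp ha
          obtain ⟨r', hr'⟩ := Set.mem_iUnion.mp hb
          exact Set.mem_iUnion.mpr ⟨(r.1 + r'.1, r.2 + r'.2), hmul r r' a hr b hr'⟩ } with hUsub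
    have hadj : Algebra.adjoin ℂ U = ⊤ := by
      rw [eq_top_iff, ← adjoin_range_ι_eq_top hSg]
      refine Algebra.adjoin_le ?_
      rintro z ⟨x, rfl⟩
      have h1 : ιg (πn x) ∈ U := by
        refine Set.mem_iUnion.mpr ⟨(1, 0), fun _ => πn x, fun _ => hπn_mem x,
          Fin.elim0, fun l => l.elim0, ?_⟩
        simp
      have h2 : ιg (πb x) ∈ U := by
        refine Set.mem_iUnion.mpr ⟨(0, 1), Fin.elim0, fun l => l.elim0,
          fun _ => πb x, fun _ => hπb_mem x, ?_⟩
        simp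
      have hx : ιg x = ιg (πn x) + ιg (πb x) := by rw [← map_add, hπsum x]
      rw [SetLike.mem_coe, hx]
      exact add_mem (Algebra.subset_adjoin h1) (Algebra.subset_adjoin h2)
    intro z
    have hz : z ∈ Subalgebra.toSubmodule (Algebra.adjoin ℂ U) := by
      rw [hadj]; exact Submodule.mem_top
    rw [Algebra.adjoin_eq_span] at hz
    have hcl : ((Submonoid.closure U : Submonoid Sg) : Set Sg) = U := by
      have h1 : U = (Usub : Set Sg) := rfl
      rw [h1, Submonoid.closure_eq]
    rwa [hcl] at hz
  have hTeig : ∀ (r : ℕ × ℕ) (c : ℂ), ∀ z ∈ Submodule.span ℂ (msetp r),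
      saLift hSg (ιg ∘ₗ (c • πn + πb)) z = c ^ r.1 • z := by
    rintro ⟨p, qq⟩ c z hz
    have heq : Set.EqOn (⇑(saLift hSg (ιg ∘ₗ (c • πn + πb))).toLinearMap)
        (⇑(c ^ p • (LinearMap.id : Sg →ₗ[ℂ] Sg))) (msetp (p, qq)) := by
      rintro w ⟨x, hx, bb, hbb, rfl⟩
      simp only [AlgHom.toLinearMap_apply, LinearMap.smul_apply, LinearMap.id_apply]
      rw [map_mul, map_prod, map_prod]
      have h1 : ∀ l, saLift hSg (ιg ∘ₗ (c • πn + πb)) (ιg (x l)) = c • ιg (x l) := by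
        intro l
        rw [saLift_ι hSg]
        simp only [LinearMap.coe_comp, Function.comp_apply, LinearMap.add_apply,
          LinearMap.smul_apply]
        rw [hπn1 _ (hx l), hπb0 _ (hx l), add_zero, map_smul]
      have h2 : ∀ l, saLift hSg (ιg ∘ₗ (c • πn + πb)) (ιg (bb l)) = ιg (bb l) := by
        intro l
        rw [saLift_ι hSg]
        simp only [LinearMap.coe_comp, Function.comp_apply, LinearMap.add_apply,
          LinearMap.smul_apply]
        rw [hπn0 _ (hbb l), hπb1 _ (hbb l), smul_zero, zero_add]
      rw [Finset.prod_congr rfl fun l _ => h1 l, Finset.prod_congr rfl fun l _ => h2 l,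
        my_prod_smul, smul_mul_assoc]
    have := LinearMap.eqOn_span heq hz
    simpa using this
  have hDeig : ∀ (r : ℕ × ℕ) (c : ℂ), ∀ z ∈ Submodule.span ℂ (msetp r),
      saLift hSg (c • ιg) z = c ^ (r.1 + r.2) • z := by
    rintro ⟨p, qq⟩ c z hz
    have heq : Set.EqOn (⇑(saLift hSg (c • ιg)).toLinearMap)
        (⇑(c ^ (p + qq) • (LinearMap.id : Sg →ₗ[ℂ] Sg))) (msetp (p, qq)) := by
      rintro w ⟨x, hx, bb, hbb, rfl⟩
      simp only [AlgHom.toLinearMap_apply, LinearMap.smul_apply, LinearMap.id_apply]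
      rw [map_mul, map_prod, map_prod]
      have h1 : ∀ y : g, saLift hSg (c • ιg) (ιg y) = c • ιg y := by
        intro y
        rw [saLift_ι hSg]
        rfl
      rw [Finset.prod_congr rfl fun l _ => h1 (x l), Finset.prod_congr rfl fun l _ => h1 (bb l),
        my_prod_smul, my_prod_smul, smul_mul_assoc, mul_smul_comm, ← mul_smul, ← pow_add]
    have := LinearMap.eqOn_span heq hz
    simpa using this
  have hψI : ∀ r : ℕ × ℕ, 2 ≤ r.2 → ∀ z ∈ Submodule.span ℂ (msetp r),
      ψ z ∈ Ideal.span ISET := by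
    rintro ⟨p, qq⟩ hqq z hz
    induction hz using Submodule.span_induction with
    | mem w hw =>
      obtain ⟨x, hx, bb, hbb, rfl⟩ := hw
      have hz2 : (∏ l : Fin p, ιg (x l)) * ∏ l : Fin qq, ιg (bb l)
          = ∏ l : Fin (p + qq), ιg (Fin.append x bb l) := by
        rw [Fin.prod_univ_add]
        simp only [Fin.append_left, Fin.append_right]
      rw [hz2, hψ (p + qq) (Fin.append x bb)]
      refine Submodule.sum_mem _ fun j _ => ?_
      have h2 : ∃ k : Fin qq, (Fin.natAdd p k) ≠ j := by
        by_contra hcon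
        push_neg at hcon
        have h0 := hcon ⟨0, by omega⟩
        have h1 := hcon ⟨1, by omega⟩
        have hval : (p + 0 : ℕ) = p + 1 := by
          calc (p + 0 : ℕ) = ((Fin.natAdd p ⟨0, by omega⟩ : Fin (p + qq)) : ℕ) := rfl
            _ = (j : ℕ) := by rw [h0]
            _ = ((Fin.natAdd p ⟨1, by omega⟩ : Fin (p + qq)) : ℕ) := by rw [h1]
            _ = p + 1 := rfl
        omega
      obtain ⟨k, hk⟩ := h2
      have hkmem : Fin.natAdd p k ∈ Finset.univ.erase j :=
        Finset.mem_erase.mpr ⟨hk, Finset.mem_univ _⟩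
      rw [← Finset.mul_prod_erase _ _ hkmem, mul_assoc]
      have hgen : ιq (i0 (Fin.append x bb (Fin.natAdd p k))) ∈ Ideal.span ISET := by
        refine Ideal.subset_span ⟨bb k, hbb k, ?_⟩
        rw [Fin.append_right]
      exact Ideal.mul_mem_right _ _ hgen
    | zero => rw [map_zero]; exact zero_mem _
    | add w w' _ _ hw hw' => rw [map_add]; exact add_mem hw hw'
    | smul a w _ hw =>
      rw [map_smul, Algebra.smul_def]
      exact Ideal.mul_mem_left _ _ hw
  have hXiI : ∀ i, Xi i ∈ Ideal.span ISET := by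
    intro i
    have hgen : ∀ w, w ∈ Submodule.span ℂ {z : Sq | ∃ b : g, b ∈ Bm ∧
        ∃ y ∈ nminus, ∃ x : Fin (d i - 2) → g, (∀ l, x l ∈ nminus) ∧
        z = ιq (i0 b) * ιq (i1 y) * ∏ l, ιq (i0 (x l))} → w ∈ Ideal.span ISET := by
      intro w hw
      induction hw using Submodule.span_induction with
      | mem w hw =>
        obtain ⟨b, hb, y, hy, x, hx, rfl⟩ := hw
        rw [mul_assoc]
        exact Ideal.mul_mem_right _ _ (Ideal.subset_span ⟨b, hb, rfl⟩)
      | zero => exact zero_mem _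
      | add w w' _ _ hw hw' => exact add_mem hw hw'
      | smul a w _ hw =>
        rw [Algebra.smul_def]
        exact Ideal.mul_mem_left _ _ hw
    exact hgen (Xi i) (hXmem i)
  refine ⟨hpart1, fun i => ?_⟩
  obtain ⟨rest, hrestEig, hrest0, hHsum⟩ := hHbulTop i
  obtain ⟨cf, hcfsupp, hcfsum⟩ := Submodule.mem_span_set.mp (hspanU (H i))
  set PQ : Sg → ℕ × ℕ := fun m => if h : ∃ r : ℕ × ℕ, m ∈ msetp r then h.choose else (0, 0)
    with hPQ
  have hPQmem : ∀ m ∈ cf.support, m ∈ msetp (PQ m) := by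
    intro m hm
    have hmU := hcfsupp (Finset.mem_coe.mpr hm)
    obtain ⟨r, hr⟩ := Set.mem_iUnion.mp hmU
    have hex : ∃ r : ℕ × ℕ, m ∈ msetp r := ⟨r, hr⟩
    rw [hPQ]
    simp only [dif_pos hex]
    exact hex.choose_spec
  set D : ℕ := (cf.support.sup fun m => max (PQ m).1 (PQ m).2) + 1 with hD
  set t : Finset (ℕ × ℕ) := Finset.range D ×ˢ Finset.range D with ht
  have hPQt : ∀ m ∈ cf.support, PQ m ∈ t := by
    intro m hm
    rw [ht, Finset.mem_product, Finset.mem_range, Finset.mem_range]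
    have h1 : max (PQ m).1 (PQ m).2 ≤ cf.support.sup fun m => max (PQ m).1 (PQ m).2 :=
      Finset.le_sup (f := fun m => max (PQ m).1 (PQ m).2) hm
    omega
  set vv : ℕ × ℕ → Sg := fun r => ∑ m ∈ cf.support.filter (fun m => PQ m = r), cf m • m
    with hvv
  have hvvB : ∀ r, vv r ∈ Submodule.span ℂ (msetp r) := by
    intro r
    refine Submodule.sum_mem _ fun m hm => ?_
    obtain ⟨hms, hPQr⟩ := Finset.mem_filter.mp hm
    exact Submodule.smul_mem _ _ (Submodule.subset_span (hPQr ▸ hPQmem m hms))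
  have hHvv : ∑ r ∈ t, vv r = H i := by
    rw [hvv]
    rw [Finset.sum_fiberwise_of_maps_to hPQt (fun m => cf m • m)]
    exact hcfsum
  set M : ℕ := 2 * D + d i + 1 with hM
  set X : ℂ → Sg := fun c => c ^ (d i - 1) • Hbul i + ∑ a ∈ Finset.range (d i), c ^ a • rest a
    with hX
  have hTH : ∀ c : ℂ, saLift hSg (ιg ∘ₗ (c • πn + πb)) (H i) = X c := by
    intro c
    rw [hHsum, map_add, map_sum, hHbulEigen i c, hX]
    congr 1
    exact Finset.sum_congr rfl fun a _ => hrestEig a c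
  have htmem : ∀ r ∈ t, r.1 < D ∧ r.2 < D := by
    intro r hr
    rw [ht, Finset.mem_product, Finset.mem_range, Finset.mem_range] at hr
    exact hr
  have hF : ∀ c : ℂ, ∀ m < M,
      (∑ r ∈ t.filter (fun r => r.1 + r.2 = m), c ^ r.1 • vv r)
        - (if m = d i then X c else 0) = 0 := by
    intro c
    refine vandermonde_smul _ fun b => ?_
    have hA1 : ∑ m ∈ Finset.range M, b ^ m •
        (∑ r ∈ t.filter (fun r => r.1 + r.2 = m), c ^ r.1 • vv r)
        = ∑ r ∈ t, b ^ (r.1 + r.2) • (c ^ r.1 • vv r) := by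
      rw [← Finset.sum_fiberwise_of_maps_to (g := fun r : ℕ × ℕ => r.1 + r.2)
        (t := Finset.range M)
        (fun r hr => by
          show r.1 + r.2 ∈ Finset.range M
          exact Finset.mem_range.mpr (by have := htmem r hr; omega))
        (fun r => b ^ (r.1 + r.2) • (c ^ r.1 • vv r))]
      refine Finset.sum_congr rfl fun m _ => ?_
      rw [Finset.smul_sum]
      exact Finset.sum_congr rfl fun r hr => by rw [(Finset.mem_filter.mp hr).2]
    have hA2 : ∑ r ∈ t, b ^ (r.1 + r.2) • (c ^ r.1 • vv r) = b ^ d i • X c := by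
      have hstep : ∀ r ∈ t, b ^ (r.1 + r.2) • (c ^ r.1 • vv r)
          = saLift hSg (ιg ∘ₗ (c • πn + πb)) (saLift hSg (b • ιg) (vv r)) := by
        intro r _
        rw [hDeig r b (vv r) (hvvB r), map_smul, hTeig r c (vv r) (hvvB r), smul_comm]
      rw [Finset.sum_congr rfl hstep, ← map_sum, ← map_sum, hHvv, hHhom i b, map_smul, hTH c]
    have hA4 : ∑ m ∈ Finset.range M, b ^ m • (if m = d i then X c else 0) = b ^ d i • X c := by
      rw [Finset.sum_congr rfl (fun m _ => by rw [smul_ite, smul_zero]),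
        Finset.sum_ite_eq' (Finset.range M) (d i) (fun m => b ^ m • X c),
        if_pos (Finset.mem_range.mpr (by omega))]
    calc ∑ m ∈ Finset.range M, b ^ m •
          ((∑ r ∈ t.filter (fun r => r.1 + r.2 = m), c ^ r.1 • vv r)
            - (if m = d i then X c else 0))
        = ∑ m ∈ Finset.range M,
          (b ^ m • (∑ r ∈ t.filter (fun r => r.1 + r.2 = m), c ^ r.1 • vv r)
            - b ^ m • (if m = d i then X c else 0)) := by
          exact Finset.sum_congr rfl fun m _ => smul_sub _ _ _
      _ = 0 := by rw [Finset.sum_sub_distrib, hA1, hA2, hA4, sub_self]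
  set corr : ℕ → Sg := fun p =>
    (if p = d i - 1 then Hbul i else 0) + (if p < d i then rest p else 0) with hcorr
  have hXcorr : ∀ c : ℂ, ∑ p ∈ Finset.range M, c ^ p • corr p = X c := by
    intro c
    have hsplit2 : ∀ p, c ^ p • corr p
        = c ^ p • (if p = d i - 1 then Hbul i else 0)
          + c ^ p • (if p < d i then rest p else 0) := by
      intro p
      simp only [hcorr]
      rw [smul_add]
    rw [Finset.sum_congr rfl fun p _ => hsplit2 p, Finset.sum_add_distrib, hX]
    congr 1
    · rw [Finset.sum_congr rfl (fun p _ => by rw [smul_ite, smul_zero]),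
        Finset.sum_ite_eq' (Finset.range M) (d i - 1) (fun p => c ^ p • Hbul i),
        if_pos (Finset.mem_range.mpr (by omega))]
    · rw [← Finset.sum_subset (Finset.range_subset_range.mpr (show d i ≤ M by omega))
        (fun p _ hp => by
          rw [if_neg (fun hlt => hp (Finset.mem_range.mpr hlt)), smul_zero])]
      exact Finset.sum_congr rfl fun p hp => by rw [if_pos (Finset.mem_range.mp hp)]
  have hW : ∀ m, m < M → ∀ p, p < M →
      (∑ r ∈ t.filter (fun r => r.1 + r.2 = m ∧ r.1 = p), vv r)
        - (if m = d i then corr p else 0) = 0 := by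
    intro m hm
    refine vandermonde_smul _ fun c => ?_
    have hB1 : ∑ p ∈ Finset.range M, c ^ p •
        (∑ r ∈ t.filter (fun r => r.1 + r.2 = m ∧ r.1 = p), vv r)
        = ∑ r ∈ t.filter (fun r => r.1 + r.2 = m), c ^ r.1 • vv r := by
      rw [← Finset.sum_fiberwise_of_maps_to (g := fun r : ℕ × ℕ => r.1)
        (s := t.filter (fun r => r.1 + r.2 = m)) (t := Finset.range M)
        (fun r hr => by
          show r.1 ∈ Finset.range M
          exact Finset.mem_range.mpr (by have := htmem r (Finset.mem_filter.mp hr).1; omega))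
        (fun r => c ^ r.1 • vv r)]
      refine Finset.sum_congr rfl fun p _ => ?_
      rw [Finset.filter_filter, Finset.smul_sum]
      exact Finset.sum_congr rfl fun r hr => by
        rw [(Finset.mem_filter.mp hr).2.2]
    have hB2 : ∑ p ∈ Finset.range M, c ^ p • (if m = d i then corr p else 0)
        = (if m = d i then X c else 0) := by
      by_cases hmd : m = d i
      · rw [if_pos hmd]
        rw [Finset.sum_congr rfl fun p _ => by rw [if_pos hmd]]
        exact hXcorr c
      · rw [if_neg hmd]
        rw [Finset.sum_congr rfl fun p _ => by rw [if_neg hmd, smul_zero]]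
        exact Finset.sum_const_zero
    calc ∑ p ∈ Finset.range M, c ^ p •
          ((∑ r ∈ t.filter (fun r => r.1 + r.2 = m ∧ r.1 = p), vv r)
            - (if m = d i then corr p else 0))
        = ∑ p ∈ Finset.range M,
          (c ^ p • (∑ r ∈ t.filter (fun r => r.1 + r.2 = m ∧ r.1 = p), vv r)
            - c ^ p • (if m = d i then corr p else 0)) := by
          exact Finset.sum_congr rfl fun p _ => smul_sub _ _ _
      _ = 0 := by rw [Finset.sum_sub_distrib, hB1, hB2, hF c m hm]
  -- identify the fibers
  have hfib : ∀ r ∈ t, t.filter (fun r' => r'.1 + r'.2 = r.1 + r.2 ∧ r'.1 = r.1) = {r} := by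
    intro r hr
    ext r'
    rw [Finset.mem_filter, Finset.mem_singleton]
    constructor
    · rintro ⟨_, hsum, hfst⟩
      have : r'.2 = r.2 := by omega
      exact Prod.ext hfst this
    · rintro rfl
      exact ⟨hr, rfl, rfl⟩
  have hvvW : ∀ r ∈ t, vv r = (if r.1 + r.2 = d i then corr r.1 else 0) := by
    intro r hr
    have h1 := hW (r.1 + r.2) (by have := htmem r hr; omega) r.1
      (by have := htmem r hr; omega)
    rw [hfib r hr, Finset.sum_singleton] at h1
    exact sub_eq_zero.mp h1
  set j0 : ℕ × ℕ := (d i - 1, d i - (d i - 1)) with hj0def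
  have hcorrd1 : corr (d i - 1) = Hbul i := by
    have h2 : (if d i - 1 < d i then rest (d i - 1) else 0) = 0 := by
      split
      · exact hrest0 _ le_rfl
      · rfl
    simp only [hcorr]
    rw [h2, add_zero]
    simp
  have hj0 : j0 ∈ t := by
    by_contra hj0t
    have hfe : t.filter (fun r => r.1 + r.2 = d i ∧ r.1 = d i - 1) = ∅ := by
      rw [Finset.filter_eq_empty_iff]
      intro r hr hc
      apply hj0t
      have hr2 : r = j0 := by
        rw [hj0def]
        refine Prod.ext hc.2 ?_
        have := hc.1
        have := hc.2
        omega
      rwa [← hr2]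
    have h1 := hW (d i) (by omega) (d i - 1) (by omega)
    rw [hfe, Finset.sum_empty, if_pos rfl, zero_sub, neg_eq_zero, hcorrd1] at h1
    exact hHbulNe i h1
  have hvvj0 : vv j0 = Hbul i := by
    have h1 := hvvW j0 hj0
    rw [if_pos (by rw [hj0def]; omega)] at h1
    rw [h1, hj0def, hcorrd1]
  have hrestI : ∀ r ∈ t.erase j0, ψ (vv r) ∈ Ideal.span ISET := by
    intro r hr
    obtain ⟨hne, hrt⟩ := Finset.mem_erase.mp hr
    by_cases hsum : r.1 + r.2 = d i
    · have hp : r.1 ≠ d i - 1 := by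
        intro hfst
        apply hne
        rw [hj0def]
        exact Prod.ext hfst (by omega)
      by_cases hplt : r.1 < d i
      · have hq2 : 2 ≤ r.2 := by omega
        exact hψI r hq2 (vv r) (hvvB r)
      · have hvr : vv r = 0 := by
          rw [hvvW r hrt, if_pos hsum, hcorr]
          simp only []
          rw [if_neg hp, if_neg hplt, add_zero]
        rw [hvr, map_zero]
        exact zero_mem _
    · rw [hvvW r hrt, if_neg hsum, map_zero]
      exact zero_mem _
  have hfinal : ψ (H i) - H1i i = Xi i + ∑ r ∈ t.erase j0, ψ (vv r) := by
    have h1 : ψ (H i) = ∑ r ∈ t, ψ (vv r) := by rw [← hHvv, map_sum]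
    have h2 : ∑ r ∈ t, ψ (vv r) = ψ (vv j0) + ∑ r ∈ t.erase j0, ψ (vv r) :=
      (Finset.add_sum_erase t _ hj0).symm
    rw [h1, h2, hvvj0, hsplit i]
    ring
  rw [hfinal]
  exact Submodule.add_mem _ (hXiI i) (Submodule.sum_mem _ hrestI)

end
end
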